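/- Suppose μ† ∈ M(Ω) satisfies the orthogonality condition L_ρ(f − Kμ†) = 0 on Ω. Then for every μ ∈ M(Ω): ∫_Ω L_ρ(f − Kμ) d(μ − μ†) = −‖Kμ† − Kμ‖²_{L²(ρ)}; in particular this quantity is strictly negative whenever ‖Kμ† − Kμ‖_{L²(ρ)} > 0, and whenever ‖f − Kμ‖_{L²(ρ)} > ‖f − Kμ†‖_{L²(ρ)}. -/

import Mathlib

open MeasureTheory RealInnerProductSpace

noncomputable section

/-- Integral of a real function against a signed measure, via the Jordan decomposition. -/
def sInt {α : Type*} [MeasurableSpace α] (μ : SignedMeasure α) (g : α → ℝ) : ℝ :=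
  (∫ w, g w ∂μ.toJordanDecomposition.posPart) - ∫ w, g w ∂μ.toJordanDecomposition.negPart

/-- Total variation norm of a signed measure. -/
def tvNorm {α : Type*} [MeasurableSpace α] (μ : SignedMeasure α) : ℝ :=
  (μ.totalVariation Set.univ).toReal

/-- Input space ℝ^d. -/
abbrev Ed (d : ℕ) := EuclideanSpace ℝ (Fin d)

/-- Parameter space ℝ^d × ℝ. -/
abbrev Pd (d : ℕ) := EuclideanSpace ℝ (Fin d) × ℝ

/-- The weight V(a,b) = 1 + ‖a‖ + |b|. -/
def Vw {d : ℕ} (w : Pd d) : ℝ := 1 + ‖w.1‖ + |w.2|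

/-- The Barron-norm functional J(μ) = ∫ V d|μ|. -/
def Jfun {d : ℕ} {Ω : Set (Pd d)} (μ : SignedMeasure ↥Ω) : ℝ :=
  ∫ w, Vw (w : Pd d) ∂μ.totalVariation

/-- (Kμ)(x) = ∫_Ω σ(aᵀx + b) dμ(a,b). -/
def Kop {d : ℕ} (σ : ℝ → ℝ) {Ω : Set (Pd d)} (μ : SignedMeasure ↥Ω) (x : Ed d) : ℝ :=
  sInt μ (fun w => σ (⟪(w : Pd d).1, x⟫ + (w : Pd d).2))

/-- (L_ρ φ)(a,b) = ∫ φ(x) σ(aᵀx + b) dρ(x). -/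
def Lop {d : ℕ} (σ : ℝ → ℝ) (ρ : Measure (Ed d)) (φ : Ed d → ℝ) (w : Pd d) : ℝ :=
  ∫ x, φ x * σ (⟪w.1, x⟫ + w.2) ∂ρ

/-- Squared L²(ρ) norm. -/
def L2sq {d : ℕ} (ρ : Measure (Ed d)) (g : Ed d → ℝ) : ℝ := ∫ x, g x ^ 2 ∂ρ

/-- L²(ρ) norm. -/
def L2norm {d : ℕ} (ρ : Measure (Ed d)) (g : Ed d → ℝ) : ℝ := Real.sqrt (L2sq ρ g)

/-- The loss R_f(μ) = ½‖Kμ − f‖²_{L²(ρ)}. -/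
def Rf {d : ℕ} (σ : ℝ → ℝ) {Ω : Set (Pd d)} (ρ : Measure (Ed d)) (f : Ed d → ℝ)
    (μ : SignedMeasure ↥Ω) : ℝ := (1 / 2) * L2sq ρ (fun x => Kop σ μ x - f x)

/-- Bregman divergence D_J^p(μ, ν) = J(μ) − J(ν) − ∫ p d(μ − ν). -/
def DJ {d : ℕ} {Ω : Set (Pd d)} (p : Pd d → ℝ) (μ ν : SignedMeasure ↥Ω) : ℝ :=
  Jfun μ - Jfun ν - sInt (μ - ν) (fun w => p (w : Pd d))


/-!
Every neuron `σ(⟪a, x⟫ + b)` with `(a, b) ∈ Ω` grows at most linearly in `x`, since `Ω` is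
bounded and `σ` is Lipschitz; with the finite second moment of `ρ` this gives all integrability
needed for Fubini, hence the adjoint relation `∫ L_ρ φ dτ = ⟨φ, Kτ⟩_{L²(ρ)}` for every signed
measure `τ` on `Ω`. Take `τ = μ - μ†` and split `f - Kμ = (f - Kμ†) + (Kμ† - Kμ)`: the
orthogonality condition says that `f - Kμ†` is orthogonal to every `Kτ`, which leaves
`-‖Kμ† - Kμ‖²`, and also gives Pythagoras `‖f - Kμ‖² = ‖f - Kμ†‖² + ‖Kμ† - Kμ‖²`, whence
the last claim.
-/

open scoped NNReal

section SignedIntegral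

variable {α : Type*} [MeasurableSpace α] {g : α → ℝ}

theorem sInt_eq_of_eq_toSignedMeasure_sub {μ : SignedMeasure α} {P N : Measure α}
    [IsFiniteMeasure P] [IsFiniteMeasure N]
    (hμ : μ = P.toSignedMeasure - N.toSignedMeasure)
    (hg : ∀ (m : Measure α) [IsFiniteMeasure m], Integrable g m) :
    sInt μ g = ∫ w, g w ∂P - ∫ w, g w ∂N := by
  have hbalance : μ.toJordanDecomposition.posPart + N = P + μ.toJordanDecomposition.negPart := by
    rw [← Measure.toSignedMeasure_eq_toSignedMeasure_iff, Measure.toSignedMeasure_add,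
      Measure.toSignedMeasure_add, ← sub_eq_sub_iff_add_eq_add, ← hμ]
    exact μ.toSignedMeasure_toJordanDecomposition
  have h := congrArg (fun m : Measure α => ∫ w, g w ∂m) hbalance
  simp only [integral_add_measure (hg _) (hg _)] at h
  rw [sInt]
  linarith

theorem sInt_sub {μ ν : SignedMeasure α}
    (hg : ∀ (m : Measure α) [IsFiniteMeasure m], Integrable g m) :
    sInt (μ - ν) g = sInt μ g - sInt ν g := by
  have hdecomp : μ - ν =
      (μ.toJordanDecomposition.posPart + ν.toJordanDecomposition.negPart).toSignedMeasure -
        (μ.toJordanDecomposition.negPart + ν.toJordanDecomposition.posPart).toSignedMeasure := by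
    conv_lhs => rw [← μ.toSignedMeasure_toJordanDecomposition,
      ← ν.toSignedMeasure_toJordanDecomposition]
    simp only [JordanDecomposition.toSignedMeasure, Measure.toSignedMeasure_add]
    abel
  rw [sInt_eq_of_eq_toSignedMeasure_sub hdecomp hg, integral_add_measure (hg _) (hg _),
    integral_add_measure (hg _) (hg _), sInt, sInt]
  ring

end SignedIntegral

theorem abs_comp_inner_add_le_of_lipschitzWith {E : Type*} [NormedAddCommGroup E]
    [InnerProductSpace ℝ E] {σ : ℝ → ℝ} {L : ℝ≥0} (hσ : LipschitzWith L σ) {r : ℝ}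
    {w : E × ℝ} (hw : ‖w‖ ≤ r) (x : E) :
    |σ (⟪w.1, x⟫ + w.2)| ≤ (|σ 0| + L * r) * (1 + ‖x‖) := by
  set t := ⟪w.1, x⟫ + w.2
  have hσt : |σ t| ≤ |σ 0| + L * |t| := by
    have := hσ.dist_le_mul t 0
    rw [Real.dist_eq, Real.dist_eq, sub_zero] at this
    linarith [abs_sub_abs_le_abs_sub (σ t) (σ 0)]
  have ht : |t| ≤ r * (1 + ‖x‖) :=
    calc |t| ≤ ‖w.1‖ * ‖x‖ + ‖w.2‖ := (abs_add_le _ _).trans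
          (add_le_add (abs_real_inner_le_norm _ _) (Real.norm_eq_abs _).ge)
      _ ≤ r * ‖x‖ + r := by
          gcongr
          exacts [(norm_fst_le w).trans hw, (norm_snd_le w).trans hw]
      _ = r * (1 + ‖x‖) := by ring
  calc |σ t| ≤ |σ 0| + L * (r * (1 + ‖x‖)) := hσt.trans (by gcongr)
    _ ≤ (|σ 0| + L * r) * (1 + ‖x‖) := by nlinarith [abs_nonneg (σ 0), norm_nonneg x]

theorem memLp_const_mul_one_add_norm {E : Type*} [NormedAddCommGroup E] [MeasurableSpace E]
    [OpensMeasurableSpace E] {ρ : Measure E} [IsFiniteMeasure ρ]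
    (hρ2 : Integrable (fun x : E => ‖x‖ ^ 2) ρ) (C : ℝ) :
    MemLp (fun x : E => C * (1 + ‖x‖)) 2 ρ :=
  ((memLp_const (1 : ℝ)).add
    ((memLp_two_iff_integrable_sq continuous_norm.aestronglyMeasurable).mpr hρ2)).const_mul C

section Neurons

variable {d : ℕ} {Ω : Set (Pd d)} {σ : ℝ → ℝ} {L : ℝ≥0}

theorem exists_abs_neuron_le (hΩ : Bornology.IsBounded Ω) (hσ : LipschitzWith L σ) :
    ∃ C, 0 ≤ C ∧
      ∀ (w : Ω) (x : Ed d), |σ (⟪(w : Pd d).1, x⟫ + (w : Pd d).2)| ≤ C * (1 + ‖x‖) := by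
  obtain ⟨r, hr⟩ := hΩ.subset_closedBall 0
  refine ⟨|σ 0| + L * max r 0, by positivity, fun w x => ?_⟩
  refine abs_comp_inner_add_le_of_lipschitzWith hσ ?_ x
  exact (mem_closedBall_zero_iff.mp (hr w.2)).trans (le_max_left r 0)

theorem continuous_neuron (hσ : Continuous σ) :
    Continuous fun p : Ed d × Ω => σ (⟪(p.2 : Pd d).1, p.1⟫ + (p.2 : Pd d).2) := by
  fun_prop

theorem integrable_neuron (hΩ : Bornology.IsBounded Ω) (hσ : LipschitzWith L σ) (x : Ed d)
    (m : Measure Ω) [IsFiniteMeasure m] :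
    Integrable (fun w : Ω => σ (⟪(w : Pd d).1, x⟫ + (w : Pd d).2)) m := by
  obtain ⟨C, -, hC⟩ := exists_abs_neuron_le hΩ hσ
  refine .of_bound ((continuous_neuron hσ.continuous).comp
    (Continuous.prodMk_right x)).aestronglyMeasurable (C * (1 + ‖x‖)) (.of_forall fun w => ?_)
  exact hC w x

theorem memLp_integral_neuron (hΩ : Bornology.IsBounded Ω) (hσ : LipschitzWith L σ)
    {ρ : Measure (Ed d)} [IsFiniteMeasure ρ] (hρ2 : Integrable (fun x : Ed d => ‖x‖ ^ 2) ρ)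
    (m : Measure Ω) [IsFiniteMeasure m] :
    MemLp (fun x => ∫ w, σ (⟪(w : Pd d).1, x⟫ + (w : Pd d).2) ∂m) 2 ρ := by
  obtain ⟨C, hC0, hC⟩ := exists_abs_neuron_le hΩ hσ
  have hmeas : AEStronglyMeasurable
      (fun x => ∫ w, σ (⟪(w : Pd d).1, x⟫ + (w : Pd d).2) ∂m) ρ :=
    ((continuous_neuron hσ.continuous).stronglyMeasurable.integral_prod_right'
      (ν := m)).aestronglyMeasurable
  refine ((memLp_const_mul_one_add_norm hρ2 C).const_mul (m.real Set.univ)).of_le hmeas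
    (.of_forall fun x => ?_)
  rw [Real.norm_of_nonneg (mul_nonneg measureReal_nonneg (by positivity)), mul_comm]
  exact norm_integral_le_of_norm_le_const
    (.of_forall fun w => (Real.norm_eq_abs _).trans_le (hC w x))

theorem memLp_Kop (hΩ : Bornology.IsBounded Ω) (hσ : LipschitzWith L σ)
    {ρ : Measure (Ed d)} [IsFiniteMeasure ρ] (hρ2 : Integrable (fun x : Ed d => ‖x‖ ^ 2) ρ)
    (μ : SignedMeasure Ω) : MemLp (Kop σ μ) 2 ρ :=
  (memLp_integral_neuron hΩ hσ hρ2 _).sub (memLp_integral_neuron hΩ hσ hρ2 _)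

theorem Kop_sub (hΩ : Bornology.IsBounded Ω) (hσ : LipschitzWith L σ) (μ ν : SignedMeasure Ω)
    (x : Ed d) : Kop σ (μ - ν) x = Kop σ μ x - Kop σ ν x :=
  sInt_sub fun m _ => integrable_neuron hΩ hσ x m

theorem integral_Lop_eq_integral_mul_integral_neuron (hΩ : Bornology.IsBounded Ω)
    (hσ : LipschitzWith L σ) {ρ : Measure (Ed d)} [IsFiniteMeasure ρ]
    (hρ2 : Integrable (fun x : Ed d => ‖x‖ ^ 2) ρ) (m : Measure Ω) [IsFiniteMeasure m]
    {φ : Ed d → ℝ} (hφ : MemLp φ 2 ρ) :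
    ∫ w, Lop σ ρ φ w ∂m = ∫ x, φ x * ∫ w, σ (⟪(w : Pd d).1, x⟫ + (w : Pd d).2) ∂m ∂ρ := by
  obtain ⟨C, -, hC⟩ := exists_abs_neuron_le hΩ hσ
  have hint : Integrable
      (Function.uncurry fun (w : Ω) (x : Ed d) => φ x * σ (⟪(w : Pd d).1, x⟫ + (w : Pd d).2))
      (m.prod ρ) := by
    refine Integrable.mono' ((hφ.norm.integrable_mul
      (memLp_const_mul_one_add_norm hρ2 C)).comp_snd m) ?_ (.of_forall fun p => ?_)
    · exact hφ.1.comp_snd.mul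
        ((continuous_neuron hσ.continuous).comp continuous_swap).aestronglyMeasurable
    · simp only [Function.uncurry, norm_mul, Real.norm_eq_abs, Pi.mul_apply]
      exact mul_le_mul_of_nonneg_left (hC p.1 p.2) (abs_nonneg _)
  simp only [Lop, integral_integral_swap hint, integral_const_mul]

theorem sInt_Lop_eq_integral_mul_Kop (hΩ : Bornology.IsBounded Ω) (hσ : LipschitzWith L σ)
    {ρ : Measure (Ed d)} [IsFiniteMeasure ρ] (hρ2 : Integrable (fun x : Ed d => ‖x‖ ^ 2) ρ)
    (τ : SignedMeasure Ω) {φ : Ed d → ℝ} (hφ : MemLp φ 2 ρ) :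
    sInt τ (fun w => Lop σ ρ φ w) = ∫ x, φ x * Kop σ τ x ∂ρ := by
  rw [sInt, integral_Lop_eq_integral_mul_integral_neuron hΩ hσ hρ2 _ hφ,
    integral_Lop_eq_integral_mul_integral_neuron hΩ hσ hρ2 _ hφ]
  simp only [Kop, sInt, mul_sub]
  exact (integral_sub (hφ.integrable_mul (memLp_integral_neuron hΩ hσ hρ2 _))
    (hφ.integrable_mul (memLp_integral_neuron hΩ hσ hρ2 _))).symm

theorem integral_mul_Kop_eq_zero_of_Lop_eq_zero (hΩ : Bornology.IsBounded Ω)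
    (hσ : LipschitzWith L σ) {ρ : Measure (Ed d)} [IsFiniteMeasure ρ]
    (hρ2 : Integrable (fun x : Ed d => ‖x‖ ^ 2) ρ) {φ : Ed d → ℝ} (hφ : MemLp φ 2 ρ)
    (hLφ : ∀ w ∈ Ω, Lop σ ρ φ w = 0) (τ : SignedMeasure Ω) :
    ∫ x, φ x * Kop σ τ x ∂ρ = 0 := by
  have hzero : (fun w : Ω => Lop σ ρ φ w) = fun _ => 0 := funext fun w => hLφ w w.2
  rw [← sInt_Lop_eq_integral_mul_Kop hΩ hσ hρ2 τ hφ, hzero]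
  simp [sInt]

end Neurons

section OrthogonalDecomposition

variable {α : Type*} [MeasurableSpace α] {μ : Measure α} {g h : α → ℝ}

theorem integral_add_mul_eq_integral_sq_of_integral_mul_eq_zero (hg : MemLp g 2 μ)
    (hh : MemLp h 2 μ) (horth : ∫ x, g x * h x ∂μ = 0) :
    ∫ x, (g x + h x) * h x ∂μ = ∫ x, h x ^ 2 ∂μ := by
  simp_rw [add_mul, sq]
  rw [integral_add (f := fun x => g x * h x) (g := fun x => h x * h x) (hg.integrable_mul hh)
    (hh.integrable_mul hh), horth, zero_add]

theorem integral_add_sq_eq_of_integral_mul_eq_zero (hg : MemLp g 2 μ) (hh : MemLp h 2 μ)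
    (horth : ∫ x, g x * h x ∂μ = 0) :
    ∫ x, (g x + h x) ^ 2 ∂μ = ∫ x, g x ^ 2 ∂μ + ∫ x, h x ^ 2 ∂μ := by
  have hcross : Integrable (fun x => 2 * (g x * h x)) μ := (hg.integrable_mul hh).const_mul 2
  have hsq : Integrable (fun x => h x ^ 2) μ := hh.integrable_sq
  calc ∫ x, (g x + h x) ^ 2 ∂μ = ∫ x, g x ^ 2 + (2 * (g x * h x) + h x ^ 2) ∂μ := by
        congr 1 with x; ring
    _ = ∫ x, g x ^ 2 ∂μ + (2 * ∫ x, g x * h x ∂μ + ∫ x, h x ^ 2 ∂μ) := by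
        rw [integral_add (g := fun x => 2 * (g x * h x) + h x ^ 2) hg.integrable_sq
          (hcross.add hsq), integral_add hcross hsq, integral_const_mul]
    _ = ∫ x, g x ^ 2 ∂μ + ∫ x, h x ^ 2 ∂μ := by rw [horth]; ring

end OrthogonalDecomposition

theorem bregman_strict_descent_general
    {d : ℕ} (Ω : Set (Pd d)) (hΩ : IsCompact Ω)
    (ρ : Measure (Ed d)) [IsProbabilityMeasure ρ]
    (hρ2 : Integrable (fun x : Ed d => ‖x‖ ^ 2) ρ)
    (σ : ℝ → ℝ) (Lσ : NNReal) (hσ : LipschitzWith Lσ σ)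
    (f : Ed d → ℝ) (hf2 : MemLp f 2 ρ)
    (μdag : SignedMeasure ↥Ω)
    (horth : ∀ w ∈ Ω, Lop σ ρ (fun x => f x - Kop σ μdag x) w = 0) :
    ∀ μ : SignedMeasure ↥Ω,
      sInt (μ - μdag) (fun w => Lop σ ρ (fun x => f x - Kop σ μ x) (w : Pd d)) =
          -L2sq ρ (fun x => Kop σ μdag x - Kop σ μ x) ∧
        (0 < L2norm ρ (fun x => Kop σ μdag x - Kop σ μ x) →
          sInt (μ - μdag) (fun w => Lop σ ρ (fun x => f x - Kop σ μ x) (w : Pd d)) < 0) ∧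
        (L2norm ρ (fun x => f x - Kop σ μdag x) < L2norm ρ (fun x => f x - Kop σ μ x) →
          sInt (μ - μdag) (fun w => Lop σ ρ (fun x => f x - Kop σ μ x) (w : Pd d)) < 0) := by
  intro μ
  have hΩb := hΩ.isBounded
  have hK (ν : SignedMeasure Ω) : MemLp (Kop σ ν) 2 ρ := memLp_Kop hΩb hσ hρ2 ν
  have hresid : MemLp (fun x => f x - Kop σ μdag x) 2 ρ := hf2.sub (hK μdag)
  have hdiff : MemLp (fun x => Kop σ μdag x - Kop σ μ x) 2 ρ := (hK μdag).sub (hK μ)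
  have horth' : ∫ x, (f x - Kop σ μdag x) * (Kop σ μdag x - Kop σ μ x) ∂ρ = 0 := by
    simpa only [Kop_sub hΩb hσ] using
      integral_mul_Kop_eq_zero_of_Lop_eq_zero hΩb hσ hρ2 hresid horth (μdag - μ)
  have hsplit (x : Ed d) :
      f x - Kop σ μ x = (f x - Kop σ μdag x) + (Kop σ μdag x - Kop σ μ x) := by ring
  have hmain : sInt (μ - μdag) (fun w => Lop σ ρ (fun x => f x - Kop σ μ x) (w : Pd d)) =
      -L2sq ρ (fun x => Kop σ μdag x - Kop σ μ x) := by
    rw [sInt_Lop_eq_integral_mul_Kop hΩb hσ hρ2 _ (φ := fun x => f x - Kop σ μ x)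
        (hf2.sub (hK μ)), L2sq,
      ← integral_add_mul_eq_integral_sq_of_integral_mul_eq_zero hresid hdiff horth',
      ← integral_neg]
    congr 1 with x
    rw [Kop_sub hΩb hσ, hsplit]
    ring
  have hpyth : L2sq ρ (fun x => f x - Kop σ μ x) =
      L2sq ρ (fun x => f x - Kop σ μdag x) + L2sq ρ (fun x => Kop σ μdag x - Kop σ μ x) := by
    simp only [L2sq, hsplit]
    exact integral_add_sq_eq_of_integral_mul_eq_zero hresid hdiff horth'
  refine ⟨hmain, fun hpos => ?_, fun hlt => ?_⟩ <;> rw [hmain, neg_lt_zero]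
  · exact Real.sqrt_pos.mp hpos
  · have hsq_lt := (Real.sqrt_lt_sqrt_iff (x := L2sq ρ (fun x => f x - Kop σ μdag x))
      (integral_nonneg fun x => sq_nonneg _)).mp hlt
    linarith

/-- If μ† satisfies the orthogonality condition L_ρ(f − Kμ†) = 0 on Ω, then
for every μ, ∫_Ω L_ρ(f − Kμ) d(μ − μ†) = −‖Kμ† − Kμ‖²_{L²(ρ)}; in particular it is
strictly negative when ‖Kμ† − Kμ‖ > 0 and when ‖f − Kμ‖ > ‖f − Kμ†‖. -/
theorem bregman_strict_descent
    {d : ℕ} (Ω : Set (Pd d)) (hΩ : IsCompact Ω)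
    (ρ : Measure (Ed d)) [IsProbabilityMeasure ρ]
    (hρ2 : Integrable (fun x : Ed d => ‖x‖ ^ 2) ρ)
    (σ : ℝ → ℝ) (Lσ : NNReal) (hσ : LipschitzWith Lσ σ)
    (f : Ed d → ℝ) (hfm : Measurable f) (hf2 : MemLp f 2 ρ)
    (μdag : SignedMeasure ↥Ω)
    (horth : ∀ w ∈ Ω, Lop σ ρ (fun x => f x - Kop σ μdag x) w = 0) :
    ∀ μ : SignedMeasure ↥Ω,
      sInt (μ - μdag) (fun w => Lop σ ρ (fun x => f x - Kop σ μ x) (w : Pd d)) =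
          -L2sq ρ (fun x => Kop σ μdag x - Kop σ μ x) ∧
        (0 < L2norm ρ (fun x => Kop σ μdag x - Kop σ μ x) →
          sInt (μ - μdag) (fun w => Lop σ ρ (fun x => f x - Kop σ μ x) (w : Pd d)) < 0) ∧
        (L2norm ρ (fun x => f x - Kop σ μdag x) < L2norm ρ (fun x => f x - Kop σ μ x) →
          sInt (μ - μdag) (fun w => Lop σ ρ (fun x => f x - Kop σ μ x) (w : Pd d)) < 0) :=
  bregman_strict_descent_general Ω hΩ ρ hρ2 σ Lσ hσ f hf2 μdag horth

end
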